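/- arXiv:2007.09705 — 2 statements merged into one kernel-verified Lean document; each statement's English description precedes it below -/
import Mathlib

section
/- Suffix Property: if two grid entries G(i,j) and G(i',j') have the same main suffix, then i = i'; that is, two strings with the same main suffix belong to the same row of the grid. -/
abbrev Digit := Fin 3

/-- Helper for `addTwo`, acting on the reversed (least significant digit first) string:
replace each digit `d` by `d - 1 (mod 3)` up to and including the first digit 0;
if no digit 0 occurs, a digit 0 is first prepended at the most significant end
(and then becomes 2). -/
def addTwoAux : List Digit → List Digit
  | [] => [2]
  | d :: rest => if d = 0 then (d + 2) :: rest else (d + 2) :: addTwoAux rest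

/-- Adding two in base 3/2: all digits at or to the right of the rightmost 0
(including that 0) are decreased by 1 modulo 3; if there is no 0, a 0 is first
prepended. -/
def addTwo (w : List Digit) : List Digit := (addTwoAux w.reverse).reverse

/-- Binary representation of `j` (digits 0 and 1, most significant first, no leading
zeros), with `binRep 0 = [0]`. -/
def binRep (j : ℕ) : List Digit :=
  if j = 0 then [0] else (Nat.digits 2 j).reverse.map (fun d => (Fin.ofNat 3 d : Digit))

/-- The grid: row 0 consists of the binary representations in increasing order, and
each subsequent row is obtained entrywise by adding two in base 3/2. -/
def G : ℕ → ℕ → List Digit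
  | 0, j => binRep j
  | i + 1, j => addTwo (G i j)

/-- The main suffix of a digit string: the suffix obtained by removing the maximal
initial segment consisting only of digits 0 and 1. -/
def mainSuffix (w : List Digit) : List Digit := w.dropWhile (fun d => d != 2)

/-! Read a digit string in base 3/2, truncating at every step: `a ↦ ⌊(3a + d)/2⌋`, starting
from 0. A string of 0s and 1s reads as 0, so the reading depends only on the main suffix, and
`addTwo` increases the reading by exactly 1. Hence every entry of row `i` reads as `i`, and the main suffix determines the row. -/

def rowIndexStep (a : ℕ) (d : Digit) : ℕ := (3 * a + d.val) / 2

def rowIndex (w : List Digit) : ℕ := w.foldl rowIndexStep 0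

lemma rowIndex_eq_foldr_reverse (w : List Digit) :
    rowIndex w = w.reverse.foldr (fun d a => rowIndexStep a d) 0 := by
  rw [rowIndex, List.foldr_reverse]

lemma rowIndexStep_two (a : ℕ) : rowIndexStep a 2 = rowIndexStep a 0 + 1 := by
  simp only [rowIndexStep]
  omega

lemma rowIndexStep_succ_add_two (a : ℕ) {d : Digit} (hd : d ≠ 0) :
    rowIndexStep (a + 1) (d + 2) = rowIndexStep a d + 1 := by
  fin_cases d <;> simp_all [rowIndexStep] <;> omega

lemma foldr_addTwoAux (l : List Digit) :
    (addTwoAux l).foldr (fun d a => rowIndexStep a d) 0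
      = l.foldr (fun d a => rowIndexStep a d) 0 + 1 := by
  induction l with
  | nil => rfl
  | cons d l ih =>
    by_cases hd : d = 0
    · simp [addTwoAux, hd, rowIndexStep_two]
    · simp [addTwoAux, hd, ih, rowIndexStep_succ_add_two _ hd]

lemma rowIndex_addTwo (w : List Digit) : rowIndex (addTwo w) = rowIndex w + 1 := by
  rw [rowIndex_eq_foldr_reverse, addTwo, List.reverse_reverse, foldr_addTwoAux,
    rowIndex_eq_foldr_reverse]

lemma rowIndex_eq_zero_of_forall_ne_two (l : List Digit) (hl : ∀ d ∈ l, d ≠ 2) :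
    rowIndex l = 0 := by
  induction l with
  | nil => rfl
  | cons d l ih =>
    have hd : rowIndexStep 0 d = 0 := by
      fin_cases d <;> simp_all [rowIndexStep]
    rw [rowIndex, List.foldl_cons, hd, ← rowIndex, ih fun x hx => hl x (List.mem_cons_of_mem _ hx)]

lemma rowIndex_append_of_forall_ne_two (l m : List Digit) (hl : ∀ d ∈ l, d ≠ 2) :
    rowIndex (l ++ m) = rowIndex m := by
  rw [rowIndex, List.foldl_append, ← rowIndex, rowIndex_eq_zero_of_forall_ne_two l hl, rowIndex]

lemma rowIndex_mainSuffix (w : List Digit) : rowIndex (mainSuffix w) = rowIndex w := by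
  conv_rhs => rw [← List.takeWhile_append_dropWhile (p := fun d => d != 2) (l := w)]
  refine (rowIndex_append_of_forall_ne_two _ _ fun d hd => ?_).symm
  simpa using List.mem_takeWhile_imp hd

lemma rowIndex_binRep (j : ℕ) : rowIndex (binRep j) = 0 := by
  refine rowIndex_eq_zero_of_forall_ne_two _ fun d hd => ?_
  unfold binRep at hd
  split_ifs at hd
  · simp_all
  · obtain ⟨x, hx, rfl⟩ := List.mem_map.mp hd
    have : x < 2 := Nat.digits_lt_base (by norm_num) (List.mem_reverse.mp hx)
    interval_cases x <;> decide

lemma rowIndex_G (i j : ℕ) : rowIndex (G i j) = i := by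
  induction i with
  | zero => exact rowIndex_binRep j
  | succ i ih => rw [G, rowIndex_addTwo, ih]

/-- Suffix property: two grid entries with the same main suffix belong to the same
row of the grid. -/
theorem suffix_property (i j i' j' : ℕ)
    (h : mainSuffix (G i j) = mainSuffix (G i' j')) : i = i' := by
  rw [← rowIndex_G i j, ← rowIndex_G i' j', ← rowIndex_mainSuffix, h, rowIndex_mainSuffix]
end

section
/- HalfZ structure: for all natural numbers a and b there exists a digit string w (possibly empty) such that G(3a,2b) = w followed by the digit 0, G(3a,2b+1) = w followed by the digit 1, and G(3a+1,2b) = w followed by the digit 2; and there exists a digit string w' such that G(3a+1,2b+1) = w' followed by the digit 0, G(3a+2,2b) = w' followed by the digit 1, and G(3a+2,2b+1) = w' followed by the digit 2. In particular, every grid entry belongs to exactly one such triple (halfZ). -/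
/-!
Appending a digit commutes with `addTwo` up to a phase: the last digit cycles `0 ↦ 2 ↦ 1 ↦ 0`,
and the prefix is advanced once on each of the steps `2 ↦ 1` and `1 ↦ 0`, so three steps
on `u ++ [d]` are two steps on `u`. As `binRep (2b)` and `binRep (2b + 1)` share their prefix
and end in `0` and `1`, row `3a` of columns `2b, 2b + 1` ends in `0, 1` with the common prefix
`addTwo^[2a] u`, and the next two rows are read off the cycle.
-/

lemma addTwo_append_zero (u : List Digit) : addTwo (u ++ [0]) = u ++ [2] := by
  simp [addTwo, addTwoAux]

lemma addTwo_append_one (u : List Digit) : addTwo (u ++ [1]) = addTwo u ++ [0] := by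
  simp [addTwo, addTwoAux]

lemma addTwo_append_two (u : List Digit) : addTwo (u ++ [2]) = addTwo u ++ [1] := by
  simp [addTwo, addTwoAux]

lemma addTwo_iterate_three_append (u : List Digit) (d : Digit) :
    addTwo^[3] (u ++ [d]) = addTwo^[2] u ++ [d] := by
  fin_cases d <;>
    simp [addTwo_append_zero, addTwo_append_one, addTwo_append_two]

lemma addTwo_iterate_three_mul_append (n : ℕ) (u : List Digit) (d : Digit) :
    addTwo^[3 * n] (u ++ [d]) = addTwo^[2 * n] u ++ [d] := by
  have hconj : Function.Semiconj (· ++ [d]) addTwo^[2] addTwo^[3] :=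
    fun u => (addTwo_iterate_three_append u d).symm
  rw [Function.iterate_mul, Function.iterate_mul]
  exact ((hconj.iterate_right n) u).symm

lemma G_eq_iterate (i j : ℕ) : G i j = addTwo^[i] (binRep j) := by
  induction i with
  | zero => rfl
  | succ i ih => rw [Function.iterate_succ_apply', ← ih, G]

lemma binRep_two_mul_add {b r : ℕ} (hb : 0 < b) (hr : r < 2) :
    binRep (2 * b + r) = binRep b ++ [Fin.ofNat 3 r] := by
  have hdigits : Nat.digits 2 (r + 2 * b) = r :: Nat.digits 2 b :=
    Nat.digits_add 2 (by norm_num) r b hr (Or.inr hb.ne')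
  simp [binRep, add_comm (2 * b), hdigits, hb.ne']

lemma exists_binRep_two_mul (b : ℕ) :
    ∃ u : List Digit, binRep (2 * b) = u ++ [0] ∧ binRep (2 * b + 1) = u ++ [1] := by
  rcases Nat.eq_zero_or_pos b with rfl | hb
  · exact ⟨[], rfl, rfl⟩
  · exact ⟨binRep b, by simpa using binRep_two_mul_add hb two_pos,
      binRep_two_mul_add hb one_lt_two⟩

lemma exists_G_three_mul_two_mul (a b : ℕ) :
    ∃ v : List Digit, G (3 * a) (2 * b) = v ++ [0] ∧ G (3 * a) (2 * b + 1) = v ++ [1] := by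
  obtain ⟨u, hu₀, hu₁⟩ := exists_binRep_two_mul b
  exact ⟨addTwo^[2 * a] u,
    by rw [G_eq_iterate, hu₀, addTwo_iterate_three_mul_append],
    by rw [G_eq_iterate, hu₁, addTwo_iterate_three_mul_append]⟩

/-- HalfZ structure: the triples `G(3a,2b), G(3a,2b+1), G(3a+1,2b)` and
`G(3a+1,2b+1), G(3a+2,2b), G(3a+2,2b+1)` each consist of a common string followed by
the digits 0, 1, 2 respectively. -/
theorem halfZ_structure (a b : ℕ) :
    (∃ w : List Digit,
      G (3 * a) (2 * b) = w ++ [0] ∧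
      G (3 * a) (2 * b + 1) = w ++ [1] ∧
      G (3 * a + 1) (2 * b) = w ++ [2]) ∧
    (∃ w' : List Digit,
      G (3 * a + 1) (2 * b + 1) = w' ++ [0] ∧
      G (3 * a + 2) (2 * b) = w' ++ [1] ∧
      G (3 * a + 2) (2 * b + 1) = w' ++ [2]) := by
  obtain ⟨v, hv₀, hv₁⟩ := exists_G_three_mul_two_mul a b
  refine ⟨⟨v, hv₀, hv₁, ?_⟩, ⟨addTwo v, ?_, ?_, ?_⟩⟩ <;>
    simp only [G, hv₀, hv₁, addTwo_append_zero, addTwo_append_one, addTwo_append_two]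
end
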